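/- If p = kq for integers k ≥ 1 and q ≥ 2, then the minimum nonzero value of ν(x^p − y^q) − ν(x^p − y^q + x^a y^b) over monomials x^a y^b strictly below the segment from (p,0) to (0,q) equals q − 1, attained at (a,b) = (p−1, 0). -/

import Mathlib

open MvPolynomial MeasureTheory

/-- The region `Γ₊(f)`: convex closure of the union of translated positive quadrants at the
points of the support of `f` (omitting the origin). -/
noncomputable def gammaPlus (f : MvPolynomial (Fin 2) ℂ) : Set (ℝ × ℝ) :=
  convexHull ℝ (⋃ m ∈ {m ∈ f.support | m ≠ 0},
    {z : ℝ × ℝ | (m 0 : ℝ) ≤ z.1 ∧ (m 1 : ℝ) ≤ z.2})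

/-- The region bounded by the Newton polygon `Γ(f)` and the coordinate axes. -/
noncomputable def newtonRegion (f : MvPolynomial (Fin 2) ℂ) : Set (ℝ × ℝ) :=
  {z : ℝ × ℝ | 0 ≤ z.1 ∧ 0 ≤ z.2} \ gammaPlus f

/-- The Newton number `ν(f) = 2S - a - b + 1` where `S` is the area of the region bounded
by the Newton polygon and the axes and `a`, `b` are the lengths of the intersections of that
region with the `x`- and `y`-axis. -/
noncomputable def newtonNumber (f : MvPolynomial (Fin 2) ℂ) : ℝ :=
  2 * (volume (newtonRegion f)).toReal
    - (volume {x : ℝ | (x, (0:ℝ)) ∈ newtonRegion f}).toReal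
    - (volume {y : ℝ | ((0:ℝ), y) ∈ newtonRegion f}).toReal + 1

/-!
`Γ₊(x^p - y^q)` is the quadrant cut off by the segment from `(p,0)` to `(0,q)`, so
`ν(x^p - y^q) = (p-1)(q-1)`. Adding a monomial `x^a y^b` below that segment replaces the segment by
the two edges through `(a,b)`, or by a single edge if `(a,b)` lies on an axis; a constant changes
nothing. Computing the areas as trapezoids, the jump is `(p-a)(q-1)` if `b = 0`, `(q-b)(p-1)` if
`a = 0`, and `pq - qa - pb` otherwise. When `q ∣ p` the last one is a positive multiple of `q`, so
every positive jump is at least `q - 1`, and `(p-1, 0)` attains it.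
-/

open Set

lemma mem_convexHull_Ici_union_Ici {E : Type*} [AddCommGroup E] [PartialOrder E]
    [IsOrderedAddMonoid E] [Module ℝ E] {a b z : E} {θ : ℝ} (h₀ : 0 ≤ θ) (h₁ : θ ≤ 1)
    (h : θ • a + (1 - θ) • b ≤ z) : z ∈ convexHull ℝ (Ici a ∪ Ici b) := by
  set d := z - (θ • a + (1 - θ) • b)
  have hd : 0 ≤ d := sub_nonneg.2 h
  have hz : θ • (a + d) + (1 - θ) • (b + d) = z := by
    simp only [smul_add, d]
    module
  have ha : a + d ∈ convexHull ℝ (Ici a ∪ Ici b) :=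
    subset_convexHull ℝ _ (Or.inl (le_add_of_nonneg_right hd))
  have hb : b + d ∈ convexHull ℝ (Ici a ∪ Ici b) :=
    subset_convexHull ℝ _ (Or.inr (le_add_of_nonneg_right hd))
  rw [← hz]
  exact convex_convexHull ℝ _ ha hb h₀ (sub_nonneg.2 h₁) (add_sub_cancel θ 1)

lemma mem_convexHull_Ici_union_Ici_of_above_segment {x₁ y₁ x₂ y₂ : ℝ} {z : ℝ × ℝ}
    (hx : x₁ < x₂) (h₁ : x₁ ≤ z.1) (h₂ : z.1 ≤ x₂)
    (hz : y₁ * (x₂ - z.1) + y₂ * (z.1 - x₁) ≤ (x₂ - x₁) * z.2) :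
    z ∈ convexHull ℝ (Ici (x₁, y₁) ∪ Ici (x₂, y₂)) := by
  have hx' : 0 < x₂ - x₁ := sub_pos.2 hx
  refine mem_convexHull_Ici_union_Ici (θ := (x₂ - z.1) / (x₂ - x₁))
    (div_nonneg (by linarith) hx'.le) ((div_le_one hx').2 (by linarith)) ?_
  rw [Prod.le_def]
  simp only [Prod.fst_add, Prod.snd_add, Prod.smul_fst, Prod.smul_snd, smul_eq_mul]
  constructor
  · apply le_of_eq
    field_simp
    ring
  · rw [one_sub_div hx'.ne', div_mul_eq_mul_div, div_mul_eq_mul_div, ← add_div, div_le_iff₀ hx']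
    linarith

lemma convex_halfPlane (a b c : ℝ) : Convex ℝ {z : ℝ × ℝ | c ≤ a * z.1 + b * z.2} :=
  convex_halfSpace_ge ⟨fun x y => by simp only [Prod.fst_add, Prod.snd_add]; ring,
    fun r x => by simp only [Prod.smul_fst, Prod.smul_snd, smul_eq_mul]; ring⟩ c

lemma convexHull_Ici_union_Ici {P Q : ℝ} (hP : 0 < P) (hQ : 0 ≤ Q) :
    convexHull ℝ (Ici (P, 0) ∪ Ici (0, Q)) = Ici 0 ∩ {z | P * Q ≤ Q * z.1 + P * z.2} := by
  apply Subset.antisymm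
  · refine convexHull_min ?_ ((convex_Ici 0).inter (convex_halfPlane Q P (P * Q)))
    rintro z (hz | hz) <;>
      simp only [mem_inter_iff, mem_Ici, Prod.le_def, Prod.fst_zero, Prod.snd_zero,
        mem_ofPred_eq] at hz ⊢ <;>
      refine ⟨⟨?_, ?_⟩, ?_⟩ <;> nlinarith
  · rintro z ⟨hz0, hz⟩
    simp only [mem_Ici, Prod.le_def, Prod.fst_zero, Prod.snd_zero, mem_ofPred_eq] at hz0 hz
    rcases le_or_gt P z.1 with hPz | hzP
    · exact subset_convexHull ℝ _ (Or.inl (Prod.le_def.2 ⟨hPz, hz0.2⟩))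
    · rw [union_comm]
      exact mem_convexHull_Ici_union_Ici_of_above_segment hP hz0.1 hzP.le (by nlinarith)

lemma convexHull_Ici_union_Ici_union_Ici {P Q A B : ℝ} (hP : 0 < P) (hQ : 0 < Q) (hA : 0 < A)
    (hB : 0 < B) (h : Q * A + P * B < P * Q) :
    convexHull ℝ (Ici (P, 0) ∪ Ici (0, Q) ∪ Ici (A, B)) =
      Ici 0 ∩ {z | B * P ≤ B * z.1 + (P - A) * z.2} ∩ {z | A * Q ≤ (Q - B) * z.1 + A * z.2} := by
  have hAP : A < P := by nlinarith
  have hBQ : B < Q := by nlinarith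
  apply Subset.antisymm
  · refine convexHull_min ?_ (((convex_Ici 0).inter (convex_halfPlane _ _ _)).inter
      (convex_halfPlane _ _ _))
    rintro z ((hz | hz) | hz) <;>
      simp only [mem_inter_iff, mem_Ici, Prod.le_def, Prod.fst_zero, Prod.snd_zero,
        mem_ofPred_eq] at hz ⊢ <;>
      refine ⟨⟨⟨?_, ?_⟩, ?_⟩, ?_⟩ <;> nlinarith
  · rintro z ⟨⟨hz0, h₁⟩, h₂⟩
    simp only [mem_Ici, Prod.le_def, mem_ofPred_eq, Prod.fst_zero, Prod.snd_zero] at hz0 h₁ h₂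
    rcases le_or_gt P z.1 with hPz | hzP
    · exact subset_convexHull ℝ _ (Or.inl (Or.inl (Prod.le_def.2 ⟨hPz, hz0.2⟩)))
    rcases le_or_gt A z.1 with hAz | hzA
    · refine convexHull_mono ?_ (mem_convexHull_Ici_union_Ici_of_above_segment
        (y₁ := B) (y₂ := 0) hAP hAz hzP.le (by nlinarith))
      exact union_subset subset_union_right (subset_union_left.trans subset_union_left)
    · refine convexHull_mono ?_ (mem_convexHull_Ici_union_Ici_of_above_segment
        (y₁ := Q) (y₂ := B) hA hz0.1 hzA.le (by nlinarith))
      exact union_subset (subset_union_right.trans subset_union_left) subset_union_right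

def trapezoid (c d u v w : ℝ) : Set (ℝ × ℝ) :=
  {z | z.1 ∈ Ico c d ∧ 0 ≤ z.2 ∧ u * z.1 + v * z.2 < w}

lemma mem_trapezoid {c d u v w : ℝ} {z : ℝ × ℝ} :
    z ∈ trapezoid c d u v w ↔ z.1 ∈ Ico c d ∧ 0 ≤ z.2 ∧ u * z.1 + v * z.2 < w :=
  Iff.rfl

lemma measurableSet_trapezoid (c d u v w : ℝ) : MeasurableSet (trapezoid c d u v w) :=
  (measurable_fst measurableSet_Ico).inter ((measurableSet_le measurable_const measurable_snd).inter
    (measurableSet_lt (f := fun z : ℝ × ℝ => u * z.1 + v * z.2) (by fun_prop) measurable_const))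

lemma volume_trapezoid {c d u v w : ℝ} (hcd : c ≤ d) (hv : 0 < v) (hc : u * c ≤ w)
    (hd : u * d ≤ w) :
    volume (trapezoid c d u v w) = ENNReal.ofReal ((d - c) * (w - u * (c + d) / 2) / v) := by
  set height : ℝ → ℝ := fun x => (w - u * x) / v
  have hslice : ∀ x, volume (Prod.mk x ⁻¹' trapezoid c d u v w) =
      (Ico c d).indicator (fun x => ENNReal.ofReal (height x)) x := by
    intro x
    by_cases hx : x ∈ Ico c d
    · have hfiber : Prod.mk x ⁻¹' trapezoid c d u v w = Ico 0 (height x) := by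
        ext y
        simp only [mem_preimage, mem_trapezoid, mem_Ico, height, lt_div_iff₀ hv]
        constructor
        · rintro ⟨-, hy, hyw⟩; exact ⟨hy, by linarith⟩
        · rintro ⟨hy, hyw⟩; exact ⟨hx, hy, by linarith⟩
      rw [hfiber, Real.volume_Ico, sub_zero, indicator_of_mem hx]
    · have hfiber : Prod.mk x ⁻¹' trapezoid c d u v w = ∅ :=
        eq_empty_of_forall_notMem fun y hy => hx hy.1
      rw [hfiber, measure_empty, indicator_of_notMem hx]
  have hnonneg : 0 ≤ᵐ[volume.restrict (Ico c d)] height := by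
    refine (ae_restrict_iff' measurableSet_Ico).2 (ae_of_all _ fun x hx => ?_)
    refine div_nonneg (sub_nonneg.2 ?_) hv.le
    rcases le_total 0 u with hu | hu <;> nlinarith [hx.1, hx.2]
  have hint : IntegrableOn height (Ico c d) :=
    (Continuous.integrableOn_Icc (by fun_prop)).mono_set Ico_subset_Icc_self
  rw [Measure.volume_eq_prod, Measure.prod_apply (measurableSet_trapezoid c d u v w)]
  simp only [hslice]
  rw [lintegral_indicator measurableSet_Ico, ← ofReal_integral_eq_lintegral_ofReal hint hnonneg,
    integral_Ico_eq_integral_Ioo, ← integral_Ioc_eq_integral_Ioo,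
    ← intervalIntegral.integral_of_le hcd]
  congr 1
  simp only [height, intervalIntegral.integral_div]
  rw [intervalIntegral.integral_sub intervalIntegrable_const
      (intervalIntegral.intervalIntegrable_id.const_mul u), intervalIntegral.integral_const,
    intervalIntegral.integral_const_mul, integral_id, smul_eq_mul]
  ring

lemma newtonRegion_eq_Ici_sdiff (f : MvPolynomial (Fin 2) ℂ) :
    newtonRegion f = Ici 0 \ gammaPlus f :=
  rfl

lemma newtonNumber_eq_of_newtonRegion {f : MvPolynomial (Fin 2) ℂ} {S a b : ℝ} (hS : 0 ≤ S)
    (ha : 0 ≤ a) (hb : 0 ≤ b) (hvol : volume (newtonRegion f) = ENNReal.ofReal S)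
    (hx : {x : ℝ | (x, (0 : ℝ)) ∈ newtonRegion f} = Ico 0 a)
    (hy : {y : ℝ | ((0 : ℝ), y) ∈ newtonRegion f} = Ico 0 b) :
    newtonNumber f = 2 * S - a - b + 1 := by
  rw [newtonNumber, hvol, hx, hy, Real.volume_Ico, Real.volume_Ico, sub_zero, sub_zero,
    ENNReal.toReal_ofReal hS, ENNReal.toReal_ofReal ha, ENNReal.toReal_ofReal hb]

lemma newtonNumber_eq_of_gammaPlus_eq_Ici_inter {f : MvPolynomial (Fin 2) ℂ} {P Q : ℝ}
    (hP : 0 < P) (hQ : 0 < Q) (hf : gammaPlus f = Ici 0 ∩ {z | P * Q ≤ Q * z.1 + P * z.2}) :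
    newtonNumber f = (P - 1) * (Q - 1) := by
  have hregion : newtonRegion f = trapezoid 0 P Q P (P * Q) := by
    ext z
    simp only [newtonRegion_eq_Ici_sdiff, hf, sdiff_self_inter, mem_sdiff, mem_Ici, Prod.le_def,
      mem_ofPred_eq, mem_trapezoid, mem_Ico, Prod.fst_zero, Prod.snd_zero, not_le]
    constructor
    · rintro ⟨⟨h1, h2⟩, h3⟩; exact ⟨⟨h1, by nlinarith⟩, h2, h3⟩
    · rintro ⟨⟨h1, -⟩, h2, h3⟩; exact ⟨⟨h1, h2⟩, h3⟩
  rw [newtonNumber_eq_of_newtonRegion (S := P * Q / 2) (by positivity) hP.le hQ.le ?_ ?_ ?_]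
  · ring
  · rw [hregion, volume_trapezoid hP.le hP (by rw [mul_zero]; positivity) (by linarith)]
    congr 1
    field_simp
    ring
  all_goals
    ext t
    simp only [hregion, mem_ofPred_eq, mem_trapezoid, mem_Ico]
    constructor
  · rintro ⟨h, -⟩; exact h
  · rintro ⟨h1, h2⟩; exact ⟨⟨h1, h2⟩, le_rfl, by nlinarith⟩
  · rintro ⟨-, h1, h2⟩; exact ⟨h1, by nlinarith⟩
  · rintro ⟨h1, h2⟩; exact ⟨⟨le_rfl, hP⟩, h1, by nlinarith⟩

lemma newtonRegion_eq_trapezoid_union_trapezoid {f : MvPolynomial (Fin 2) ℂ} {P Q A B : ℝ}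
    (hA : 0 < A) (hB : 0 < B) (hAP : A < P) (hBQ : B < Q) (h : Q * A + P * B < P * Q)
    (hf : gammaPlus f =
      Ici 0 ∩ {z | B * P ≤ B * z.1 + (P - A) * z.2} ∩ {z | A * Q ≤ (Q - B) * z.1 + A * z.2}) :
    newtonRegion f = trapezoid 0 A (Q - B) A (A * Q) ∪ trapezoid A P B (P - A) (B * P) := by
  ext z
  simp only [newtonRegion_eq_Ici_sdiff, hf, inter_assoc, sdiff_self_inter, mem_sdiff,
    mem_inter_iff, mem_Ici, Prod.le_def, mem_ofPred_eq, Prod.fst_zero, Prod.snd_zero, not_and_or,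
    not_le, mem_union, mem_trapezoid, mem_Ico]
  -- left of `x = A` the upper edge is the one through `(0,Q)` and `(A,B)`, right of it the other
  rcases lt_or_ge z.1 A with hzA | hAz
  · constructor
    · rintro ⟨⟨h1, h2⟩, h3 | h3⟩
      · exact Or.inl ⟨⟨h1, hzA⟩, h2, by nlinarith⟩
      · exact Or.inl ⟨⟨h1, hzA⟩, h2, h3⟩
    · rintro (⟨⟨h1, -⟩, h2, h3⟩ | ⟨⟨h1, -⟩, -⟩)
      · exact ⟨⟨h1, h2⟩, Or.inr h3⟩
      · linarith
  · constructor
    · rintro ⟨⟨h1, h2⟩, h3 | h3⟩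
      · exact Or.inr ⟨⟨hAz, by nlinarith⟩, h2, h3⟩
      · exact Or.inr ⟨⟨hAz, by nlinarith⟩, h2, by nlinarith⟩
    · rintro (⟨⟨-, h1⟩, -⟩ | ⟨⟨h1, -⟩, h2, h3⟩)
      · linarith
      · exact ⟨⟨by linarith, h2⟩, Or.inl h3⟩

lemma newtonNumber_eq_of_gammaPlus_eq_Ici_inter_inter {f : MvPolynomial (Fin 2) ℂ} {P Q A B : ℝ}
    (hP : 0 < P) (hQ : 0 < Q) (hA : 0 < A) (hB : 0 < B) (h : Q * A + P * B < P * Q)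
    (hf : gammaPlus f =
      Ici 0 ∩ {z | B * P ≤ B * z.1 + (P - A) * z.2} ∩ {z | A * Q ≤ (Q - B) * z.1 + A * z.2}) :
    newtonNumber f = A * Q + P * B - P - Q + 1 := by
  have hAP : A < P := by nlinarith
  have hBQ : B < Q := by nlinarith
  have hregion := newtonRegion_eq_trapezoid_union_trapezoid hA hB hAP hBQ h hf
  rw [newtonNumber_eq_of_newtonRegion (S := (A * Q + P * B) / 2) (by positivity) hP.le hQ.le
    ?_ ?_ ?_]
  · ring
  · have hdisj : Disjoint (trapezoid 0 A (Q - B) A (A * Q)) (trapezoid A P B (P - A) (B * P)) :=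
      disjoint_left.2 fun z h₁ h₂ => (Ico_disjoint_Ico_same).ne_of_mem h₁.1 h₂.1 rfl
    rw [hregion, measure_union hdisj (measurableSet_trapezoid _ _ _ _ _),
      volume_trapezoid hA.le hA (by rw [mul_zero]; positivity) (by nlinarith),
      volume_trapezoid hAP.le (by linarith) (by nlinarith) (by nlinarith),
      ← ENNReal.ofReal_add (div_nonneg (mul_nonneg (by linarith) (by nlinarith)) hA.le)
        (div_nonneg (mul_nonneg (by linarith) (by nlinarith)) (by linarith))]
    congr 1
    field_simp [(sub_pos.2 hAP).ne']
    ring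
  all_goals
    ext t
    simp only [hregion, mem_ofPred_eq, mem_union, mem_trapezoid, mem_Ico]
    constructor
  · rintro (⟨h1, -⟩ | ⟨h1, -⟩) <;> constructor <;> linarith [h1.1, h1.2]
  · rintro ⟨h1, h2⟩
    rcases lt_or_ge t A with htA | hAt
    · exact Or.inl ⟨⟨h1, htA⟩, le_rfl, by nlinarith⟩
    · exact Or.inr ⟨⟨hAt, h2⟩, le_rfl, by nlinarith⟩
  · rintro (⟨-, h1, h2⟩ | ⟨⟨h1, -⟩, -⟩)
    · exact ⟨h1, by nlinarith⟩
    · linarith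
  · rintro ⟨h1, h2⟩; exact Or.inl ⟨⟨le_rfl, hA⟩, h1, by nlinarith⟩

open Finsupp

lemma support_monomial_sub_monomial {e₁ e₂ : Fin 2 →₀ ℕ} (h₁₂ : e₁ ≠ e₂) :
    (monomial e₁ (1 : ℂ) - monomial e₂ 1).support = {e₁, e₂} := by
  ext m
  simp only [MvPolynomial.mem_support_iff, coeff_sub, coeff_monomial,
    Finset.mem_insert, Finset.mem_singleton]
  by_cases h1 : e₁ = m <;> by_cases h2 : e₂ = m <;> simp_all [eq_comm]

lemma support_monomial_sub_monomial_add_monomial {e₁ e₂ e₃ : Fin 2 →₀ ℕ}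
    (h₁₂ : e₁ ≠ e₂) (h₁₃ : e₁ ≠ e₃) (h₂₃ : e₂ ≠ e₃) :
    (monomial e₁ (1 : ℂ) - monomial e₂ 1 + monomial e₃ 1).support = {e₁, e₂, e₃} := by
  ext m
  simp only [MvPolynomial.mem_support_iff, coeff_add, coeff_sub, coeff_monomial,
    Finset.mem_insert, Finset.mem_singleton]
  by_cases h1 : e₁ = m <;> by_cases h2 : e₂ = m <;> by_cases h3 : e₃ = m <;> simp_all [eq_comm]

lemma gammaPlus_eq_of_support {f : MvPolynomial (Fin 2) ℂ} {s : Finset (Fin 2 →₀ ℕ)}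
    (hf : f.support = s) (hs : (0 : Fin 2 →₀ ℕ) ∉ s) :
    gammaPlus f = convexHull ℝ (⋃ m ∈ s, Ici ((m 0 : ℝ), (m 1 : ℝ))) := by
  unfold gammaPlus
  congr 1
  ext z
  simp only [hf, mem_iUnion, Finset.mem_filter, exists_prop, mem_Ici, Prod.le_def]
  constructor
  · rintro ⟨m, ⟨hm, -⟩, hz⟩
    exact ⟨m, hm, hz⟩
  · rintro ⟨m, hm, hz⟩
    exact ⟨m, ⟨hm, ne_of_mem_of_not_mem hm hs⟩, hz⟩

lemma gammaPlus_add_C (f : MvPolynomial (Fin 2) ℂ) (c : ℂ) :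
    gammaPlus (f + C c) = gammaPlus f := by
  unfold gammaPlus
  congr 5 with m
  by_cases hm : m = 0 <;> simp [hm, coeff_C, eq_comm]

lemma gammaPlus_X_pow_sub_X_pow {P Q : ℕ} (hP : P ≠ 0) (hQ : Q ≠ 0) :
    gammaPlus (X 0 ^ P - X 1 ^ Q : MvPolynomial (Fin 2) ℂ) =
      convexHull ℝ (Ici ((P : ℝ), 0) ∪ Ici (0, (Q : ℝ))) := by
  rw [X_pow_eq_monomial, X_pow_eq_monomial,
    gammaPlus_eq_of_support (support_monomial_sub_monomial (by simp [single_eq_single_iff, hP]))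
      (by simp [eq_comm, hP, hQ])]
  simp

lemma X_pow_mul_X_pow_eq_monomial (A B : ℕ) :
    (X 0 ^ A * X 1 ^ B : MvPolynomial (Fin 2) ℂ) = monomial (single 0 A + single 1 B) 1 := by
  rw [X_pow_eq_monomial, X_pow_eq_monomial, monomial_mul, one_mul]

lemma single_zero_add_single_one_injective :
    Function.Injective fun e : ℕ × ℕ => single (0 : Fin 2) e.1 + single 1 e.2 := by
  rintro ⟨a, b⟩ ⟨c, d⟩ h
  have h₀ : a = c := by simpa using DFunLike.congr_fun h 0
  have h₁ : b = d := by simpa using DFunLike.congr_fun h 1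
  rw [h₀, h₁]

lemma gammaPlus_X_pow_sub_X_pow_add_X_pow_mul_X_pow {P Q A B : ℕ} (hP : P ≠ 0) (hQ : Q ≠ 0)
    (hAB : (A, B) ≠ (0, 0)) (hAB₁ : (A, B) ≠ (P, 0)) (hAB₂ : (A, B) ≠ (0, Q)) :
    gammaPlus (X 0 ^ P - X 1 ^ Q + X 0 ^ A * X 1 ^ B : MvPolynomial (Fin 2) ℂ) =
      convexHull ℝ (Ici ((P : ℝ), 0) ∪ Ici (0, (Q : ℝ)) ∪ Ici ((A : ℝ), (B : ℝ))) := by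
  have hinj := single_zero_add_single_one_injective
  have hpoly : (X 0 ^ P - X 1 ^ Q + X 0 ^ A * X 1 ^ B : MvPolynomial (Fin 2) ℂ) =
      monomial (single 0 P + single 1 0) 1 - monomial (single 0 0 + single 1 Q) 1 +
        monomial (single 0 A + single 1 B) 1 := by
    simp only [← X_pow_mul_X_pow_eq_monomial, pow_zero, mul_one, one_mul]
  rw [hpoly, gammaPlus_eq_of_support (support_monomial_sub_monomial_add_monomial
    (hinj.ne (by simp [hP])) (hinj.ne hAB₁.symm) (hinj.ne hAB₂.symm))]
  · simp [union_assoc]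
  · rw [show (0 : Fin 2 →₀ ℕ) = single 0 0 + single 1 0 by simp]
    simp only [Finset.mem_insert, Finset.mem_singleton, not_or]
    exact ⟨hinj.ne (show ((0, 0) : ℕ × ℕ) ≠ (P, 0) by simp [hP.symm]),
      hinj.ne (show ((0, 0) : ℕ × ℕ) ≠ (0, Q) by simp [hQ.symm]), hinj.ne hAB.symm⟩

lemma newtonNumber_add_C (f : MvPolynomial (Fin 2) ℂ) (c : ℂ) :
    newtonNumber (f + C c) = newtonNumber f := by
  simp only [newtonNumber, newtonRegion, gammaPlus_add_C]

lemma newtonNumber_X_pow_sub_X_pow {P Q : ℕ} (hP : 0 < P) (hQ : 0 < Q) :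
    newtonNumber (X 0 ^ P - X 1 ^ Q : MvPolynomial (Fin 2) ℂ) = ((P : ℝ) - 1) * ((Q : ℝ) - 1) :=
  newtonNumber_eq_of_gammaPlus_eq_Ici_inter (by positivity) (by positivity) (by
    rw [gammaPlus_X_pow_sub_X_pow hP.ne' hQ.ne', convexHull_Ici_union_Ici (by positivity)
      (by positivity)])

lemma newtonNumber_X_pow_sub_X_pow_add_X_zero_pow {P Q A : ℕ} (hA : 0 < A) (hAP : A < P)
    (hQ : 0 < Q) :
    newtonNumber (X 0 ^ P - X 1 ^ Q + X 0 ^ A : MvPolynomial (Fin 2) ℂ) =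
      ((A : ℝ) - 1) * ((Q : ℝ) - 1) := by
  apply newtonNumber_eq_of_gammaPlus_eq_Ici_inter (by positivity) (by positivity)
  have hγ := gammaPlus_X_pow_sub_X_pow_add_X_pow_mul_X_pow (A := A) (B := 0) (by omega : P ≠ 0)
    hQ.ne' (by simp [hA.ne']) (by simp [hAP.ne]) (by simp [hA.ne'])
  have hsub : Ici ((P : ℝ), (0 : ℝ)) ⊆ Ici ((A : ℝ), 0) :=
    Ici_subset_Ici.2 (Prod.mk_le_mk.2 ⟨by exact_mod_cast hAP.le, le_rfl⟩)
  simp only [pow_zero, mul_one, Nat.cast_zero] at hγ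
  rw [hγ, union_right_comm, union_eq_right.2 hsub,
    convexHull_Ici_union_Ici (by positivity) (by positivity)]

lemma newtonNumber_X_pow_sub_X_pow_add_X_one_pow {P Q B : ℕ} (hP : 0 < P) (hB : 0 < B)
    (hBQ : B < Q) :
    newtonNumber (X 0 ^ P - X 1 ^ Q + X 1 ^ B : MvPolynomial (Fin 2) ℂ) =
      ((P : ℝ) - 1) * ((B : ℝ) - 1) := by
  apply newtonNumber_eq_of_gammaPlus_eq_Ici_inter (by positivity) (by positivity)
  have hγ := gammaPlus_X_pow_sub_X_pow_add_X_pow_mul_X_pow (A := 0) (B := B) hP.ne'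
    (by omega : Q ≠ 0) (by simp [hB.ne']) (by simp [hP.ne]) (by simp [hBQ.ne])
  have hsub : Ici ((0 : ℝ), (Q : ℝ)) ⊆ Ici (0, (B : ℝ)) :=
    Ici_subset_Ici.2 (Prod.mk_le_mk.2 ⟨le_rfl, by exact_mod_cast hBQ.le⟩)
  simp only [pow_zero, one_mul, Nat.cast_zero] at hγ
  rw [hγ, union_assoc, union_eq_right.2 hsub,
    convexHull_Ici_union_Ici (by positivity) (by positivity)]

lemma newtonNumber_X_pow_sub_X_pow_add_X_pow_mul_X_pow {P Q A B : ℕ} (hA : 0 < A) (hB : 0 < B)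
    (h : Q * A + P * B < P * Q) :
    newtonNumber (X 0 ^ P - X 1 ^ Q + X 0 ^ A * X 1 ^ B : MvPolynomial (Fin 2) ℂ) =
      A * Q + P * B - P - Q + 1 := by
  have hP : 0 < P := Nat.pos_of_ne_zero (by rintro rfl; simp at h)
  have hQ : 0 < Q := Nat.pos_of_ne_zero (by rintro rfl; simp at h)
  have h' : (Q : ℝ) * A + P * B < P * Q := by exact_mod_cast h
  apply newtonNumber_eq_of_gammaPlus_eq_Ici_inter_inter (by positivity) (by positivity)
    (by positivity) (by positivity) h'
  rw [gammaPlus_X_pow_sub_X_pow_add_X_pow_mul_X_pow hP.ne' hQ.ne' (by simp [hA.ne'])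
    (by simp [hB.ne']) (by simp [hA.ne']), convexHull_Ici_union_Ici_union_Ici (by positivity)
    (by positivity) (by positivity) (by positivity) h']

lemma le_mul_sub_of_dvd {p q a b : ℕ} (hqp : q ∣ p) (h : q * a + p * b < p * q) :
    q ≤ p * q - (q * a + p * b) :=
  Nat.le_of_dvd (Nat.sub_pos_of_lt h)
    (Nat.dvd_sub (dvd_mul_left q p) (dvd_add (dvd_mul_right q a) (dvd_mul_of_dvd_left hqp b)))

lemma sub_one_le_newtonNumber_sub {p q a b : ℕ} (hqp : q ∣ p) (hab : q * a + p * b < p * q)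
    (hpos : 0 < newtonNumber (X 0 ^ p - X 1 ^ q : MvPolynomial (Fin 2) ℂ) -
      newtonNumber (X 0 ^ p - X 1 ^ q + X 0 ^ a * X 1 ^ b)) :
    (q : ℝ) - 1 ≤ newtonNumber (X 0 ^ p - X 1 ^ q : MvPolynomial (Fin 2) ℂ) -
      newtonNumber (X 0 ^ p - X 1 ^ q + X 0 ^ a * X 1 ^ b) := by
  have hp : 0 < p := Nat.pos_of_ne_zero (by rintro rfl; simp at hab)
  have hq : 0 < q := Nat.pos_of_ne_zero (by rintro rfl; simp at hab)
  have hqp' : (q : ℝ) ≤ p := by exact_mod_cast Nat.le_of_dvd hp hqp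
  rcases Nat.eq_zero_or_pos a with rfl | ha <;> rcases Nat.eq_zero_or_pos b with rfl | hb
  · have hC := newtonNumber_add_C (X 0 ^ p - X 1 ^ q) 1
    rw [map_one] at hC
    simp only [pow_zero, mul_one, hC, sub_self, lt_self_iff_false] at hpos
  · have hbq : b < q := Nat.lt_of_mul_lt_mul_left (a := p) (by simpa using hab)
    have hbq' : (b : ℝ) + 1 ≤ q := by exact_mod_cast hbq
    rw [pow_zero, one_mul, newtonNumber_X_pow_sub_X_pow hp hq,
      newtonNumber_X_pow_sub_X_pow_add_X_one_pow hp hb hbq]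
    nlinarith
  · have hap : a < p := Nat.lt_of_mul_lt_mul_left (a := q) (by linarith)
    have hap' : (a : ℝ) + 1 ≤ p := by exact_mod_cast hap
    have hq' : (1 : ℝ) ≤ q := by exact_mod_cast hq
    rw [pow_zero, mul_one, newtonNumber_X_pow_sub_X_pow hp hq,
      newtonNumber_X_pow_sub_X_pow_add_X_zero_pow ha hap hq]
    nlinarith
  · have hdvd : (q : ℝ) ≤ p * q - (q * a + p * b) := by
      have h := Nat.cast_le (α := ℝ) |>.2 (le_mul_sub_of_dvd hqp hab)
      rw [Nat.cast_sub hab.le] at h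
      push_cast at h
      exact h
    rw [newtonNumber_X_pow_sub_X_pow hp hq,
      newtonNumber_X_pow_sub_X_pow_add_X_pow_mul_X_pow ha hb hab]
    linarith

/-- If `p = kq` with `k ≥ 1`, `q ≥ 2`, the minimum nonzero value of
`ν(x^p - y^q) - ν(x^p - y^q + x^a y^b)` over monomials strictly below the segment from
`(p,0)` to `(0,q)` equals `q - 1`, attained at `(a,b) = (p-1, 0)`. -/
theorem nondeg_jump_q_dvd (p q k : ℕ) (hk : 1 ≤ k) (hq : 2 ≤ q) (hp : p = k * q) :
    newtonNumber ((X 0) ^ p - (X 1) ^ q)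
        - newtonNumber ((X 0) ^ p - (X 1) ^ q + (X 0) ^ (p - 1)) = (q : ℝ) - 1 ∧
    IsLeast {m : ℝ | 0 < m ∧ ∃ a b : ℕ, q * a + p * b < p * q ∧
        m = newtonNumber ((X 0) ^ p - (X 1) ^ q)
              - newtonNumber ((X 0) ^ p - (X 1) ^ q + (X 0) ^ a * (X 1) ^ b)}
      ((q : ℝ) - 1) := by
  have hqp : q ≤ p := hp ▸ Nat.le_mul_of_pos_left q hk
  have hjump : newtonNumber (X 0 ^ p - X 1 ^ q : MvPolynomial (Fin 2) ℂ) -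
      newtonNumber (X 0 ^ p - X 1 ^ q + X 0 ^ (p - 1)) = (q : ℝ) - 1 := by
    rw [newtonNumber_X_pow_sub_X_pow (by omega) (by omega),
      newtonNumber_X_pow_sub_X_pow_add_X_zero_pow (by omega) (by omega) (by omega),
      Nat.cast_pred (by omega)]
    ring
  have hbelow : q * (p - 1) + p * 0 < p * q := by
    rw [mul_zero, add_zero, mul_comm p]
    exact Nat.mul_lt_mul_of_pos_left (by omega) (by omega)
  have hq' : (2 : ℝ) ≤ q := by exact_mod_cast hq
  refine ⟨hjump, ⟨by linarith, p - 1, 0, hbelow, by simpa using hjump.symm⟩, ?_⟩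
  rintro m ⟨hm, a, b, hab, rfl⟩
  exact sub_one_le_newtonNumber_sub (hp ▸ dvd_mul_left q k) hab hm
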